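/- The normalizing constant of the generalized Gaussian distribution is correct: for any dimension p ≥ 1, shape parameter β > 0, mean μ ∈ ℝ^p, and positive definite p×p matrix Σ, the integral over ℝ^p of C_p(β)/|Σ|^{1/2} · exp(-(1/2)·((x-μ)ᵀ Σ⁻¹ (x-μ))^β) dx equals 1, where C_p(β) = Γ(p/2)·β / (π^{p/2} · Γ(p/(2β)) · 2^{p/(2β)}). -/

import Mathlib

open MeasureTheory Matrix Real

/-!
Translate by `μ` and substitute `x = R y`, where `R` is the positive square root of `Σ⁻¹`: the
quadratic form becomes `y ⬝ᵥ y` and the Jacobian contributes `√det Σ`. The remaining integrand is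
radial, so integrating over spheres leaves `p · vol(B₁) · ∫₀^∞ r^(p-1) exp(-r^(2β)/2) dr`, a Gamma
integral after the substitution `t = r^(2β)/2`.
-/

section ChangeOfVariables

variable {ι E : Type*} [Fintype ι] [DecidableEq ι] [NormedAddCommGroup E] [NormedSpace ℝ E]

open scoped MatrixOrder

theorem integral_comp_mulVec {M : Matrix ι ι ℝ} (hM : M.det ≠ 0) (f : (ι → ℝ) → E) :
    ∫ y, f (M *ᵥ y) = |M.det|⁻¹ • ∫ x, f x := by
  have hM' : LinearMap.det (toLin' M) ≠ 0 := by rwa [LinearMap.det_toLin']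
  let e := ((toLin' M).equivOfDetNeZero hM').toContinuousLinearEquiv
  calc ∫ y, f (M *ᵥ y) = ∫ x, f x ∂(Measure.map (toLin' M) volume) :=
        (e.toHomeomorph.measurableEmbedding.integral_map f).symm
    _ = |M.det|⁻¹ • ∫ x, f x := by
      rw [Real.map_matrix_volume_pi_eq_smul_volume_pi hM, integral_smul_measure,
        ENNReal.toReal_ofReal (by positivity), abs_inv]

theorem integral_comp_dotProduct_mulVec {A : Matrix ι ι ℝ} (hA : A.PosDef) (g : ℝ → E) :
    ∫ x : ι → ℝ, g (x ⬝ᵥ (A *ᵥ x)) = (√A.det)⁻¹ • ∫ y : ι → ℝ, g (y ⬝ᵥ y) := by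
  obtain ⟨R, hRR, hRsymm, hRdet⟩ : ∃ R : Matrix ι ι ℝ, R * R = A ∧ Rᵀ = R ∧ R.det = √A.det :=
    ⟨CFC.sqrt A, CFC.sqrt_mul_sqrt_self A hA.posSemidef.nonneg,
      (nonneg_iff_posSemidef.mp (CFC.sqrt_nonneg A)).isHermitian,
      by simpa using hA.posSemidef.det_sqrt⟩
  have hquad : ∀ x, x ⬝ᵥ (A *ᵥ x) = (R *ᵥ x) ⬝ᵥ (R *ᵥ x) := fun x => by
    rw [← hRR, ← mulVec_mulVec, dotProduct_mulVec, ← mulVec_transpose, hRsymm]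
  have hRdet_ne : R.det ≠ 0 := by rw [hRdet]; exact (sqrt_pos.mpr hA.det_pos).ne'
  simp_rw [hquad]
  rw [integral_comp_mulVec hRdet_ne (fun y => g (y ⬝ᵥ y)), hRdet,
    abs_of_nonneg (sqrt_nonneg _)]

end ChangeOfVariables

section Radial

variable {ι E : Type*} [Fintype ι] [NormedAddCommGroup E] [NormedSpace ℝ E]

theorem integral_comp_dotProduct_self (g : ℝ → E) :
    ∫ y : ι → ℝ, g (y ⬝ᵥ y) = ∫ z : EuclideanSpace ℝ ι, g (‖z‖ ^ 2) := by
  rw [← (EuclideanSpace.volume_preserving_symm_measurableEquiv_toLp ι).integral_comp']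
  congr with z
  rw [← real_inner_self_eq_norm_sq, EuclideanSpace.inner_eq_star_dotProduct]
  rfl

theorem integral_exp_neg_mul_norm_rpow [Nonempty ι] {q b : ℝ} (hq : 0 < q) (hb : 0 < b) :
    ∫ z : EuclideanSpace ℝ ι, exp (-b * ‖z‖ ^ q)
      = 2 * π ^ ((Fintype.card ι : ℝ) / 2) * Gamma (Fintype.card ι / q)
        / (q * Gamma (Fintype.card ι / 2) * b ^ ((Fintype.card ι : ℝ) / q)) := by
  set n := Fintype.card ι with hn_def
  have hn : (0 : ℝ) < n := by exact_mod_cast Fintype.card_pos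
  have hball : volume.real (Metric.ball (0 : EuclideanSpace ℝ ι) 1)
      = π ^ ((n : ℝ) / 2) / Gamma (n / 2 + 1) := by
    rw [measureReal_def, EuclideanSpace.volume_ball, ← hn_def, ENNReal.ofReal_one, one_pow,
      one_mul, ENNReal.toReal_ofReal (by positivity), sqrt_eq_rpow, ← rpow_natCast,
      ← rpow_mul pi_pos.le]
    ring_nf
  have hradial : ∫ r in Set.Ioi (0 : ℝ), r ^ (n - 1) * exp (-b * r ^ q)
      = b ^ (-(n / q)) * (1 / q) * Gamma (n / q) := by
    have (r : ℝ) : r ^ (n - 1) = r ^ ((n : ℝ) - 1) := by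
      rw [← rpow_natCast, Nat.cast_sub Fintype.card_pos, Nat.cast_one]
    simp_rw [this]
    rw [integral_rpow_mul_exp_neg_mul_rpow hq (by linarith) hb, sub_add_cancel, neg_div]
  simp only [integral_fun_norm_addHaar volume (fun r => exp (-b * r ^ q)),
    finrank_euclideanSpace, nsmul_eq_mul, smul_eq_mul]
  rw [hball, hradial, Gamma_add_one (by positivity), rpow_neg hb.le]
  have hΓ := (Gamma_pos_of_pos (by positivity : (0 : ℝ) < n / 2)).ne'
  have hbn := (rpow_pos_of_pos hb (n / q)).ne'
  field_simp
  ring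

theorem integral_exp_neg_mul_dotProduct_self_rpow [Nonempty ι] {β b : ℝ} (hβ : 0 < β)
    (hb : 0 < b) :
    ∫ y : ι → ℝ, exp (-b * (y ⬝ᵥ y) ^ β)
      = 2 * π ^ ((Fintype.card ι : ℝ) / 2) * Gamma (Fintype.card ι / (2 * β))
        / (2 * β * Gamma (Fintype.card ι / 2) * b ^ ((Fintype.card ι : ℝ) / (2 * β))) := by
  rw [integral_comp_dotProduct_self (fun t => exp (-b * t ^ β)),
    ← integral_exp_neg_mul_norm_rpow (by positivity) hb]
  congr with z
  rw [← rpow_natCast, ← rpow_mul (norm_nonneg z)]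
  norm_num

end Radial

/-- The normalizing constant of the generalized Gaussian distribution is correct. -/
theorem ggd_density_integrates_to_one
    (p : ℕ) (hp : 1 ≤ p) (β : ℝ) (hβ : 0 < β)
    (μ : Fin p → ℝ) (S : Matrix (Fin p) (Fin p) ℝ) (hS : S.PosDef) :
    ∫ x : Fin p → ℝ,
      (Real.Gamma (p / 2) * β /
        (Real.pi ^ ((p : ℝ) / 2) * Real.Gamma (p / (2 * β)) * 2 ^ ((p : ℝ) / (2 * β))))
        / Real.sqrt S.det *
      Real.exp (-(1 / 2) * ((x - μ) ⬝ᵥ (S⁻¹ *ᵥ (x - μ))) ^ β) = 1 := by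
  have : Nonempty (Fin p) := Fin.pos_iff_nonempty.mp hp
  rw [integral_const_mul,
    integral_sub_right_eq_self (fun x => exp (-(1 / 2) * (x ⬝ᵥ (S⁻¹ *ᵥ x)) ^ β)) μ,
    integral_comp_dotProduct_mulVec hS.inv (fun t => exp (-(1 / 2) * t ^ β)),
    det_nonsing_inv, Ring.inverse_eq_inv', sqrt_inv, inv_inv, smul_eq_mul,
    integral_exp_neg_mul_dotProduct_self_rpow hβ one_half_pos, Fintype.card_fin,
    one_div 2, inv_rpow zero_le_two]
  have hΓ := (Gamma_pos_of_pos (by positivity : (0 : ℝ) < p / 2)).ne'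
  have hΓβ := (Gamma_pos_of_pos (by positivity : (0 : ℝ) < p / (2 * β))).ne'
  have hdet := (sqrt_pos.mpr hS.det_pos).ne'
  field_simp
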